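/- arXiv:2102.11900 — 7 statements merged into one kernel-verified Lean document; each statement's English description precedes it below -/
import Mathlib

section
/- Let Ω be a finite set, let G ≤ Sym(Ω) be a permutation group of fixity f ≥ 2, let p be a prime with p > f, and let α ∈ Ω. If p divides the order of the point stabilizer G_α, then G_α contains a Sylow p-subgroup of G. -/
/-! A Sylow `p`-subgroup `Q` of `G_α` is nontrivial, so it fixes fewer than `p` points. The
normalizer of `Q` permutes these points, so any `p`-subgroup of it has orbits of `p`-power size
`< p` there and fixes them all; in particular `N_P(Q) ≤ G_α`, hence `N_P(Q) = Q`, for a Sylow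
`p`-subgroup `P ⊇ Q` of `G`. As a proper subgroup of a `p`-group is properly contained in its
normalizer, `Q = P`. -/

variable {Ω : Type*} [Fintype Ω]

/-- The number of fixed points of a permutation. -/
noncomputable def fixedCount (g : Equiv.Perm Ω) : ℕ := Nat.card {x : Ω // g x = x}

/-- `G` has fixity `f`: every non-trivial element fixes at most `f` points,
and some non-trivial element fixes exactly `f` points. -/
def HasFixity (G : Subgroup (Equiv.Perm Ω)) (f : ℕ) : Prop :=
  (∀ g ∈ G, g ≠ 1 → fixedCount g ≤ f) ∧ ∃ g ∈ G, g ≠ 1 ∧ fixedCount g = f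

/-- `G` is transitive on `Ω`. -/
def IsTransitive (G : Subgroup (Equiv.Perm Ω)) : Prop :=
  ∀ α β : Ω, ∃ g ∈ G, g α = β

/-- `G` is elusive: transitive, and it has no fixed-point-free element of prime order. -/
def IsElusive (G : Subgroup (Equiv.Perm Ω)) : Prop :=
  IsTransitive G ∧ ¬ ∃ g ∈ G, (orderOf g).Prime ∧ ∀ x : Ω, g x ≠ x

open MulAction Subgroup

section

variable {G X : Type*} [Group G] [MulAction G X] {p : ℕ}

theorem IsPGroup.mem_fixedPoints_of_ncard_orbit_lt [Fact p.Prime] (hG : IsPGroup p G) {a : X}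
    [Finite (orbit G a)] (ha : (orbit G a).ncard < p) : a ∈ fixedPoints G X := by
  rw [← subsingleton_orbit_iff_mem_fixedPoints, ← Set.ncard_le_one_iff_subsingleton]
  obtain ⟨n, hn⟩ := hG.card_orbit a
  rw [Nat.card_coe_set_eq] at hn
  rcases n with _ | n
  · exact hn.le
  · exact absurd (hn ▸ ha) (not_lt.mpr (Nat.le_self_pow n.succ_ne_zero p))

theorem smul_mem_fixedPoints_of_mem_normalizer {H : Subgroup G} {g : G} (hg : g ∈ normalizer H)
    {a : X} (ha : a ∈ fixedPoints H X) : g • a ∈ fixedPoints H X := by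
  rintro ⟨h, hh⟩
  have hconj : g⁻¹ * h * g ∈ H := (mem_normalizer_iff''.mp hg h).mp hh
  calc (h : G) • g • a = g • (g⁻¹ * h * g) • a := by simp [mul_smul]
    _ = g • a := by rw [← Subgroup.mk_smul _ hconj, ha ⟨_, hconj⟩]

theorem IsPGroup.eq_of_inf_normalizer_le [Fact p.Prime] {P Q : Subgroup G} [Finite P]
    (hP : IsPGroup p P) (hQP : Q ≤ P) (hN : P ⊓ normalizer Q ≤ Q) : Q = P := by
  have := hP.isNilpotent
  have hself : normalizer (Q.subgroupOf P) = Q.subgroupOf P := by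
    rw [← subgroupOf_normalizer_eq hQP]
    exact le_antisymm (fun x hx => hN ⟨x.2, hx⟩) fun x hx => le_normalizer hx
  have htop := normalizerCondition_iff_only_full_group_self_normalizing.mp
    Group.normalizerCondition_of_isNilpotent _ hself
  exact le_antisymm hQP (subgroupOf_eq_top.mp htop)

theorem Sylow.eq_map_subtype_of_le {H : Subgroup G} (Q : Sylow p H) {R : Subgroup G}
    (hR : IsPGroup p R) (hQR : (Q : Subgroup H).map H.subtype ≤ R) (hRH : R ≤ H) :
    R = (Q : Subgroup H).map H.subtype := by
  have hRQ : R.subgroupOf H = Q := Q.3 hR.comap_subtype (map_le_iff_le_comap.mp hQR)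
  rw [← hRQ, subgroupOf_map_subtype, inf_eq_left.mpr hRH]

theorem exists_sylow_le_stabilizer_of_ncard_fixedBy_lt [Fact p.Prime] [Finite G] [Finite X]
    (hfix : ∀ g : G, g ≠ 1 → (fixedBy X g).ncard < p) (a : X)
    (hdvd : p ∣ Nat.card (stabilizer G a)) :
    ∃ P : Sylow p G, (P : Subgroup G) ≤ stabilizer G a := by
  obtain ⟨Q⟩ : Nonempty (Sylow p (stabilizer G a)) := inferInstance
  set Q' := (Q : Subgroup _).map (stabilizer G a).subtype
  have hQ'a : Q' ≤ stabilizer G a := map_subtype_le _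
  obtain ⟨P, hQ'P⟩ := (Q.2.map _ : IsPGroup p Q').exists_le_sylow
  have hfixQ' : (fixedPoints Q' X).ncard < p := by
    obtain ⟨q, hq, hq1⟩ := Q'.bot_or_exists_ne_one.resolve_left <| by
      rw [map_eq_bot_iff_of_injective _ (subtype_injective _)]
      exact Q.ne_bot_of_dvd_card hdvd
    have hsub : fixedPoints Q' X ⊆ fixedBy X (q : G) := fun x hx => hx ⟨q, hq⟩
    exact (Set.ncard_le_ncard hsub).trans_lt (hfix q hq1)
  have hN : (P : Subgroup G) ⊓ normalizer Q' ≤ stabilizer G a := by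
    intro g hg
    have horbit : orbit ↥((P : Subgroup G) ⊓ normalizer Q') a ⊆ fixedPoints Q' X := by
      rintro _ ⟨n, rfl⟩
      exact smul_mem_fixedPoints_of_mem_normalizer n.2.2 fun q => hQ'a q.2
    exact P.2.to_inf_left.mem_fixedPoints_of_ncard_orbit_lt
      ((Set.ncard_le_ncard horbit).trans_lt hfixQ') ⟨g, hg⟩
  have hNQ' : (P : Subgroup G) ⊓ normalizer Q' = Q' :=
    Q.eq_map_subtype_of_le P.2.to_inf_left (le_inf hQ'P le_normalizer) hN
  exact ⟨P, P.2.eq_of_inf_normalizer_le hQ'P hNQ'.le ▸ hQ'a⟩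

end

theorem fixedCount_eq_ncard_fixedBy {X : Type*} (g : Equiv.Perm X) :
    fixedCount g = (fixedBy X g).ncard :=
  Nat.card_coe_set_eq _

theorem stmt_0_general (G : Subgroup (Equiv.Perm Ω)) (f : ℕ)
    (hfix : HasFixity G f) (p : ℕ) (hp : p.Prime) (hpf : f < p) (α : Ω)
    (hdvd : p ∣ Nat.card ↥(G ⊓ MulAction.stabilizer (Equiv.Perm Ω) α)) :
    ∃ P : Sylow p ↥G, Subgroup.map G.subtype (P : Subgroup ↥G) ≤
      G ⊓ MulAction.stabilizer (Equiv.Perm Ω) α := by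
  have : Fact p.Prime := ⟨hp⟩
  have hcard : Nat.card (stabilizer G α) = Nat.card ↥(G ⊓ stabilizer (Equiv.Perm Ω) α) := by
    rw [← card_map_of_injective G.subtype_injective, inf_comm, ← subgroupOf_map_subtype]
    rfl
  have hfixG (g : G) (hg : g ≠ 1) : (fixedBy Ω g).ncard < p :=
    fixedCount_eq_ncard_fixedBy (g : Equiv.Perm Ω) ▸
      (hfix.1 g g.2 (by simpa using hg)).trans_lt hpf
  obtain ⟨P, hP⟩ := exists_sylow_le_stabilizer_of_ncard_fixedBy_lt hfixG α (hcard ▸ hdvd)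
  exact ⟨P, by rintro _ ⟨g, hg, rfl⟩; exact ⟨g.2, hP hg⟩⟩

/-- if `G` has fixity `f ≥ 2`, `p > f` is a prime dividing `|G_α|`,
then `G_α` contains a Sylow `p`-subgroup of `G`. -/
theorem stmt_0 (G : Subgroup (Equiv.Perm Ω)) (f : ℕ) (hf : 2 ≤ f)
    (hfix : HasFixity G f) (p : ℕ) (hp : p.Prime) (hpf : f < p) (α : Ω)
    (hdvd : p ∣ Nat.card ↥(G ⊓ MulAction.stabilizer (Equiv.Perm Ω) α)) :
    ∃ P : Sylow p ↥G, Subgroup.map G.subtype (P : Subgroup ↥G) ≤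
      G ⊓ MulAction.stabilizer (Equiv.Perm Ω) α :=
  stmt_0_general G f hfix p hp hpf α hdvd
end

section
/- Let Ω be a finite set, let G ≤ Sym(Ω) be a transitive permutation group of fixity f ≥ 2, and let p be a prime with p > f. If G contains a non-trivial normal p-subgroup, then for every α ∈ Ω the prime p does not divide the order of the point stabilizer G_α. -/
variable {Ω : Type*} [Fintype Ω]

/-! A non-trivial normal subgroup of a transitive group has no fixed points, since its fixed-point
set is invariant under the whole group. For the normal `p`-subgroup this forces `p ∣ |Ω|`. An
element of order `p` in `G_α` then fixes a number of points congruent to `|Ω| ≡ 0` modulo `p`,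
and at least the point `α`, hence at least `p > f` points. -/

open MulAction

theorem MulAction.fixedPoints_eq_empty_of_normal {G α : Type*} [Group G] [MulAction G α]
    [FaithfulSMul G α] [IsPretransitive G α] {N : Subgroup G} [N.Normal] (hN : N ≠ ⊥) :
    fixedPoints N α = ∅ := by
  refine Set.eq_empty_of_forall_notMem fun a ha => hN ?_
  have hfix : ∀ b : α, b ∈ fixedPoints N α := fun b => by
    obtain ⟨g, rfl⟩ := exists_smul_eq G a b
    exact smul_mem_fixedPoints_of_normal g ha
  refine (Subgroup.eq_bot_iff_forall N).2 fun n hn => eq_of_smul_eq_smul (α := α) fun b => ?_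
  rw [one_smul]
  exact hfix b ⟨n, hn⟩

theorem IsPGroup.dvd_card_of_fixedPoints_eq_empty {p : ℕ} [Fact p.Prime] {H α : Type*} [Group H]
    [MulAction H α] (hH : IsPGroup p H) (h : fixedPoints H α = ∅) : p ∣ Nat.card α := by
  by_contra hpα
  exact (hH.nonempty_fixed_point_of_prime_not_dvd_card α hpα).ne_empty h

theorem IsTransitive.isPretransitive {X : Type*} {G : Subgroup (Equiv.Perm X)}
    (h : IsTransitive G) : IsPretransitive G X :=
  ⟨fun a b => let ⟨g, hg, hgab⟩ := h a b; ⟨⟨g, hg⟩, hgab⟩⟩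

theorem fixedCount_eq_card_compl_support [DecidableEq Ω] (σ : Equiv.Perm Ω) :
    fixedCount σ = σ.supportᶜ.card := by
  rw [fixedCount, Nat.card_eq_fintype_card, Fintype.card_subtype]
  congr 1
  ext x
  simp

theorem le_fixedCount_of_pow_eq_one {p n : ℕ} [Fact p.Prime] {σ : Equiv.Perm Ω}
    (hσ : σ ^ p ^ n = 1) (hpΩ : p ∣ Fintype.card Ω) {a : Ω} (ha : σ a = a) :
    p ≤ fixedCount σ := by
  classical
  have hpos : 0 < fixedCount σ := Nat.card_pos_iff.2 ⟨⟨⟨a, ha⟩⟩, inferInstance⟩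
  have hdvd : p ∣ fixedCount σ := by
    rw [fixedCount_eq_card_compl_support, ← Nat.modEq_zero_iff_dvd]
    exact (Equiv.Perm.card_compl_support_modEq hσ).trans (Nat.modEq_zero_iff_dvd.2 hpΩ)
  exact Nat.le_of_dvd hpos hdvd

theorem stmt_1_general (G : Subgroup (Equiv.Perm Ω)) (htr : IsTransitive G) (f : ℕ)
    (hfix : HasFixity G f) (p : ℕ) (hp : p.Prime) (hpf : f < p)
    (N : Subgroup ↥G) (hNnormal : N.Normal) (hNbot : N ≠ ⊥) (hNp : IsPGroup p ↥N) :
    ∀ α : Ω, ¬ p ∣ Nat.card ↥(G ⊓ MulAction.stabilizer (Equiv.Perm Ω) α) := by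
  intro α hdvd
  have : Fact p.Prime := ⟨hp⟩
  have := htr.isPretransitive
  have hpΩ : p ∣ Fintype.card Ω := by
    rw [← Nat.card_eq_fintype_card]
    exact hNp.dvd_card_of_fixedPoints_eq_empty (fixedPoints_eq_empty_of_normal hNbot)
  obtain ⟨σ, hσ⟩ := exists_prime_orderOf_dvd_card' p hdvd
  have hσ' : orderOf (σ : Equiv.Perm Ω) = p := (Subgroup.orderOf_coe σ).trans hσ
  have hσ1 : (σ : Equiv.Perm Ω) ≠ 1 := fun h => hp.ne_one (by rw [← hσ', h, orderOf_one])
  have hσp : (σ : Equiv.Perm Ω) ^ p ^ 1 = 1 := by rw [pow_one, ← hσ', pow_orderOf_eq_one]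
  have hpσ := le_fixedCount_of_pow_eq_one hσp hpΩ σ.2.2
  have hσf := hfix.1 σ σ.2.1 hσ1
  omega

/-- a transitive group of fixity `f ≥ 2` with a non-trivial normal
`p`-subgroup for a prime `p > f` has point stabilizers of order coprime to `p`. -/
theorem stmt_1 (G : Subgroup (Equiv.Perm Ω)) (htr : IsTransitive G) (f : ℕ) (hf : 2 ≤ f)
    (hfix : HasFixity G f) (p : ℕ) (hp : p.Prime) (hpf : f < p)
    (N : Subgroup ↥G) (hNnormal : N.Normal) (hNbot : N ≠ ⊥) (hNp : IsPGroup p ↥N) :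
    ∀ α : Ω, ¬ p ∣ Nat.card ↥(G ⊓ MulAction.stabilizer (Equiv.Perm Ω) α) :=
  stmt_1_general G htr f hfix p hp hpf N hNnormal hNbot hNp
end

section
/- Let Ω be a finite set, let G ≤ Sym(Ω) be a permutation group of fixity f ≥ 2, let p be a prime with p > f, let α ∈ Ω, and let P be a Sylow p-subgroup of G such that the stabilizer P_α = P ∩ G_α is non-trivial. Then the center Z(P) is contained in G_α. -/
variable {Ω : Type*} [Fintype Ω]

/-!
Take a non-trivial `x ∈ P` fixing `α`. The centre `Z(P)` centralizes `x`, so it permutes the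
at most `f < p` fixed points of `x`; as orbits of the `p`-group `Z(P)` have `p`-power length,
the orbit of `α` is `{α}`.
-/

open MulAction

theorem IsPGroup.mem_fixedPoints_of_card_orbit_lt {p : ℕ} [Fact p.Prime] {K α : Type*} [Group K]
    [MulAction K α] (hK : IsPGroup p K) {a : α} [Finite (orbit K a)]
    (h : Nat.card (orbit K a) < p) : a ∈ fixedPoints K α := by
  obtain ⟨n, hn⟩ := hK.card_orbit a
  have hn0 : n = 0 := by
    by_contra hn0
    exact (hn ▸ h).not_ge (Nat.le_self_pow hn0 p)
  rw [← subsingleton_orbit_iff_mem_fixedPoints, ← Set.subsingleton_coe]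
  exact (Nat.card_eq_one_iff_unique.mp (by rw [hn, hn0, pow_zero])).1

theorem orbit_subset_fixedBy_of_mem_centralizer {M α : Type*} [Group M] [MulAction M α]
    {K : Subgroup M} {g : M} (hg : g ∈ Subgroup.centralizer K) {a : α} (ha : g • a = a) :
    orbit K a ⊆ fixedBy α g := by
  rintro _ ⟨k, rfl⟩
  change g • (k : M) • a = (k : M) • a
  rw [smul_smul, ← Subgroup.mem_centralizer_iff.mp hg k k.2, mul_smul, ha]

theorem le_stabilizer_of_mem_centralizer {p : ℕ} [Fact p.Prime] {M α : Type*} [Group M]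
    [MulAction M α] [Finite α] {K : Subgroup M} (hK : IsPGroup p K) {g : M}
    (hg : g ∈ Subgroup.centralizer K) {a : α} (ha : g • a = a)
    (hfix : Nat.card (fixedBy α g) < p) : K ≤ stabilizer M a := by
  have horbit : Nat.card (orbit K a) < p :=
    (Nat.card_mono (Set.toFinite _) (orbit_subset_fixedBy_of_mem_centralizer hg ha)).trans_lt hfix
  intro k hk
  exact hK.mem_fixedPoints_of_card_orbit_lt horbit ⟨k, hk⟩

theorem stmt_2_general (G : Subgroup (Equiv.Perm Ω)) (f : ℕ)
    (hfix : HasFixity G f) (p : ℕ) (hp : p.Prime) (hpf : f < p) (α : Ω)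
    (P : Sylow p ↥G)
    (hPα : Subgroup.map G.subtype (P : Subgroup ↥G) ⊓
      MulAction.stabilizer (Equiv.Perm Ω) α ≠ ⊥) :
    Subgroup.map (Subgroup.map G.subtype (P : Subgroup ↥G)).subtype
      (Subgroup.center ↥(Subgroup.map G.subtype (P : Subgroup ↥G))) ≤
      MulAction.stabilizer (Equiv.Perm Ω) α := by
  have := Fact.mk hp
  set Q := Subgroup.map G.subtype (P : Subgroup ↥G)
  obtain ⟨⟨x, hxQ, hxα⟩, hx1⟩ := Subgroup.ne_bot_iff_exists_ne_one.mp hPα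
  have hxG : x ∈ G := Subgroup.map_subtype_le _ hxQ
  have hZ : IsPGroup p (Subgroup.map Q.subtype (Subgroup.center Q)) :=
    ((P.isPGroup'.map G.subtype).to_subgroup _).map Q.subtype
  have hxZ : x ∈ Subgroup.centralizer (Subgroup.map Q.subtype (Subgroup.center Q)) := by
    rintro _ ⟨c, hc, rfl⟩
    exact (congrArg Subtype.val (Subgroup.mem_center_iff.mp hc ⟨x, hxQ⟩)).symm
  exact le_stabilizer_of_mem_centralizer hZ hxZ hxα
    ((hfix.1 x hxG fun h ↦ hx1 (Subtype.ext h)).trans_lt hpf)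

/-- if `G` has fixity `f ≥ 2`, `p > f` is prime, and `P` is a Sylow
`p`-subgroup of `G` whose stabilizer of `α` is non-trivial, then `Z(P) ≤ G_α`. -/
theorem stmt_2 (G : Subgroup (Equiv.Perm Ω)) (f : ℕ) (hf : 2 ≤ f)
    (hfix : HasFixity G f) (p : ℕ) (hp : p.Prime) (hpf : f < p) (α : Ω)
    (P : Sylow p ↥G)
    (hPα : Subgroup.map G.subtype (P : Subgroup ↥G) ⊓
      MulAction.stabilizer (Equiv.Perm Ω) α ≠ ⊥) :
    Subgroup.map (Subgroup.map G.subtype (P : Subgroup ↥G)).subtype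
      (Subgroup.center ↥(Subgroup.map G.subtype (P : Subgroup ↥G))) ≤
      MulAction.stabilizer (Equiv.Perm Ω) α :=
  stmt_2_general G f hfix p hp hpf α P hPα
end

section
/- Let Ω be a finite set and let G ≤ Sym(Ω) be an elusive permutation group of fixity f. Then f ≥ 3. -/
/-!
In degree `n = |Ω| ≤ 2` a non-trivial element is a fixed-point-free transposition, so `n ≥ 3`
and some prime `p` has `p`-part `n_p ≥ 3`. By transitivity, every orbit of a Sylow `p`-subgroup
`P` of `G` has length divisible by `n_p`. An element `z` of order `p` in the centre of `P` has a
fixed point `α`, since `G` is elusive, and its fixed-point set is `P`-invariant, so it contains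
the `P`-orbit of `α`. Hence `z` is a non-trivial element with at least `n_p ≥ 3` fixed points.
-/

variable {Ω : Type*} [Fintype Ω]

open MulAction Equiv

lemma Nat.exists_prime_three_le_ordProj {n : ℕ} (hn : 3 ≤ n) :
    ∃ p, p.Prime ∧ p ∣ n ∧ 3 ≤ ordProj[p] n := by
  rcases n.eq_two_pow_or_exists_odd_prime_and_dvd with ⟨k, rfl⟩ | ⟨p, hp, hpn, ⟨m, rfl⟩⟩
  · have hk : k ≠ 0 := by rintro rfl; simp at hn
    refine ⟨2, prime_two, dvd_pow_self 2 hk, ?_⟩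
    simpa [prime_two.factorization_pow] using hn
  · have := hp.two_le
    refine ⟨2 * m + 1, hp, hpn, le_trans (by omega : 3 ≤ 2 * m + 1) ?_⟩
    exact Nat.le_of_dvd (ordProj_pos _ _) (dvd_ordProj_of_dvd (by omega) hp hpn)

lemma MulAction.orbit_subset_fixedBy_of_mem_center {G X : Type*} [Group G] [MulAction G X]
    {z : G} (hz : z ∈ Subgroup.center G) {x : X} (hx : x ∈ fixedBy X z) :
    orbit G x ⊆ fixedBy X z := by
  rintro _ ⟨g, rfl⟩
  rw [mem_fixedBy, smul_smul, ← Subgroup.mem_center_iff.mp hz g, mul_smul, hx]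

lemma Sylow.ordProj_card_dvd_card_orbit {G X : Type*} [Group G] [Finite G] [MulAction G X]
    [IsPretransitive G X] {p : ℕ} [Fact p.Prime] (P : Sylow p G) (x : X) :
    ordProj[p] (Nat.card X) ∣ Nat.card (orbit P x) := by
  have hstab : stabilizer P x = (stabilizer G x).subgroupOf P := rfl
  have hdvd : Nat.card X ∣ P.index * Nat.card (orbit P x) := by
    rw [← index_stabilizer_of_transitive G x, Nat.card_coe_set_eq, ← index_stabilizer, hstab,
      ← Subgroup.relIndex, ← Subgroup.inf_relIndex_right, mul_comm,
      Subgroup.relIndex_mul_index inf_le_right]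
    exact Subgroup.index_dvd_of_le inf_le_left
  have hcop : (ordProj[p] (Nat.card X)).Coprime P.index :=
    ((Nat.Prime.coprime_iff_not_dvd Fact.out).2 P.not_dvd_index).pow_left _
  exact hcop.dvd_of_dvd_mul_left ((Nat.ordProj_dvd _ _).trans hdvd)

lemma Sylow.exists_mem_center_orderOf_eq {G : Type*} [Group G] [Finite G] {p : ℕ}
    [Fact p.Prime] (P : Sylow p G) (hp : p ∣ Nat.card G) :
    ∃ z ∈ Subgroup.center P, orderOf z = p := by
  have : Nontrivial P := (Subgroup.nontrivial_iff_ne_bot _).mpr (P.ne_bot_of_dvd_card hp)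
  have := P.isPGroup'.center_nontrivial
  obtain ⟨k, hk, hcard⟩ :=
    (P.isPGroup'.to_subgroup (Subgroup.center P)).nontrivial_iff_card.mp this
  obtain ⟨z, hz⟩ := exists_prime_orderOf_dvd_card' p (hcard ▸ dvd_pow_self p hk.ne')
  exact ⟨z, z.2, by rwa [Subgroup.orderOf_coe]⟩

lemma IsElusive.three_le_card {G : Subgroup (Perm Ω)} (hel : IsElusive G) {g : Perm Ω}
    (hg : g ∈ G) (hg1 : g ≠ 1) : 3 ≤ Fintype.card Ω := by
  classical
  have h2 := g.two_le_card_support_of_ne_one hg1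
  have hle := Finset.card_le_univ g.support
  by_contra! h3
  have hsupp : g.support.card = 2 := by omega
  have huniv : g.support = Finset.univ := Finset.eq_univ_of_card _ (by omega)
  refine hel.2 ⟨g, hg, ?_, fun x => Perm.mem_support.mp (huniv ▸ Finset.mem_univ x)⟩
  rw [(Perm.card_support_eq_two.mp hsupp).isCycle.orderOf, hsupp]
  exact Nat.prime_two

lemma IsElusive.exists_ordProj_le_fixedCount [Nonempty Ω] {G : Subgroup (Perm Ω)}
    (hel : IsElusive G) {p : ℕ} (hp : p.Prime) (hpn : p ∣ Fintype.card Ω) :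
    ∃ g ∈ G, g ≠ 1 ∧ ordProj[p] (Fintype.card Ω) ≤ fixedCount g := by
  have := Fact.mk hp
  have : IsPretransitive G Ω :=
    ⟨fun x y => let ⟨g, hg, hgx⟩ := hel.1 x y; ⟨⟨g, hg⟩, hgx⟩⟩
  obtain ⟨P⟩ : Nonempty (Sylow p G) := inferInstance
  obtain ⟨x₀⟩ : Nonempty Ω := inferInstance
  have hpG : p ∣ Nat.card G := by
    rw [← Nat.card_eq_fintype_card, ← index_stabilizer_of_transitive G x₀] at hpn
    exact hpn.trans (Subgroup.index_dvd_card _)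
  obtain ⟨z, hzc, hz⟩ := P.exists_mem_center_orderOf_eq hpG
  set g : Perm Ω := ((z : G) : Perm Ω)
  have hg : orderOf g = p := by rw [Subgroup.orderOf_coe, Subgroup.orderOf_coe, hz]
  obtain ⟨x, hx⟩ : ∃ x, g x = x := by
    by_contra! h
    exact hel.2 ⟨g, (z : G).2, hg ▸ hp, h⟩
  refine ⟨g, (z : G).2, fun h => hp.ne_one (by rw [← hg, h, orderOf_one]), ?_⟩
  calc ordProj[p] (Fintype.card Ω)
      ≤ Nat.card (orbit P x) := by
        have := (nonempty_orbit (M := P) x).to_subtype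
        rw [← Nat.card_eq_fintype_card]
        exact Nat.le_of_dvd Nat.card_pos (P.ordProj_card_dvd_card_orbit x)
    _ ≤ fixedCount g := Nat.card_mono (Set.toFinite _)
        (orbit_subset_fixedBy_of_mem_center hzc hx)

/-- an elusive group of fixity `f` satisfies `f ≥ 3`. -/
theorem stmt_4 (G : Subgroup (Equiv.Perm Ω)) (f : ℕ) (hel : IsElusive G)
    (hfix : HasFixity G f) :
    3 ≤ f := by
  obtain ⟨g, hgG, hg1, -⟩ := hfix.2
  have hn := hel.three_le_card hgG hg1
  have : Nonempty Ω := Fintype.card_pos_iff.mp (by omega)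
  obtain ⟨p, hp, hpn, hp3⟩ := Nat.exists_prime_three_le_ordProj hn
  obtain ⟨z, hzG, hz1, hz⟩ := hel.exists_ordProj_le_fixedCount hp hpn
  exact hp3.trans (hz.trans (hfix.1 z hzG hz1))
end

section
/- Let Ω be a finite set of odd cardinality and let G ≤ Sym(Ω) be an elusive permutation group of fixity f. Then f ≥ 5. -/
variable {Ω : Type*} [Fintype Ω]

/-! For a prime `p ∣ |Ω|`, Cauchy's theorem gives `g ∈ G` of order `p`; elusiveness gives it a
fixed point, and `|Fix g| ≡ |Ω| ≡ 0 (mod p)`, so `g` fixes at least `p` points and `p ≤ f`.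
As `|Ω|` is odd, `f ≤ 4` would force `|Ω| = 3^k`. But a transitive group of prime-power degree
`p^k` is never elusive: a Sylow `p`-subgroup `P` is still transitive, and an element of order `p`
in `Z(P)` is fixed-point-free, because its fixed-point set is `P`-invariant. -/

open MulAction

section

variable {G X : Type*} [Group G] [MulAction G X]

theorem MulAction.fixedBy_eq_univ_of_mem_center [IsPretransitive G X] {g : G}
    (hg : g ∈ Subgroup.center G) {x : X} (hx : g • x = x) : fixedBy X g = Set.univ := by
  refine Set.eq_univ_of_forall fun y => ?_
  obtain ⟨h, rfl⟩ := exists_smul_eq G x y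
  rw [mem_fixedBy, ← mul_smul, ← Subgroup.mem_center_iff.mp hg h, mul_smul, hx]

theorem MulAction.card_dvd_card_of_isPretransitive [IsPretransitive G X] [Nonempty X] :
    Nat.card X ∣ Nat.card G :=
  index_stabilizer_of_transitive G (Classical.arbitrary X) ▸ Subgroup.index_dvd_card _

theorem Sylow.pow_dvd_relIndex_of_pow_dvd_index [Finite G] {p k : ℕ} [Fact p.Prime]
    (P : Sylow p G) {H : Subgroup G} (hH : p ^ k ∣ H.index) : p ^ k ∣ H.relIndex P := by
  -- both sides are the index of `H ⊓ P`
  have hindex : H.relIndex P * (P : Subgroup G).index = (P : Subgroup G).relIndex H * H.index := by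
    rw [← Subgroup.inf_relIndex_right, Subgroup.relIndex_mul_index inf_le_right,
      ← Subgroup.inf_relIndex_left, Subgroup.relIndex_mul_index inf_le_left]
  have hcop : Nat.Coprime (p ^ k) (P : Subgroup G).index :=
    Nat.Coprime.pow_left k ((Fact.out : p.Prime).coprime_iff_not_dvd.mpr P.not_dvd_index)
  exact hcop.dvd_of_dvd_mul_right (hindex ▸ dvd_mul_of_dvd_right hH _)

theorem Sylow.isPretransitive_of_card_eq_prime_pow [Finite G] [IsPretransitive G X] {p k : ℕ}
    [Fact p.Prime] (hX : Nat.card X = p ^ k) (P : Sylow p G) : IsPretransitive P X := by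
  have hX0 : Nat.card X ≠ 0 := hX ▸ pow_ne_zero k (Fact.out : p.Prime).ne_zero
  have : Finite X := Nat.finite_of_card_ne_zero hX0
  obtain ⟨x⟩ : Nonempty X := (Nat.card_ne_zero.mp hX0).1
  rw [isPretransitive_iff_orbit_eq_univ x]
  have hstab : stabilizer P x = (stabilizer G x).subgroupOf P := by ext; rfl
  have hdvd : p ^ k ∣ (orbit P x).ncard := by
    rw [← index_stabilizer, hstab]
    exact P.pow_dvd_relIndex_of_pow_dvd_index (by rw [index_stabilizer_of_transitive, hX])
  refine Set.eq_of_subset_of_ncard_le (Set.subset_univ _) ?_ Set.finite_univ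
  rw [Set.ncard_univ, hX]
  exact Nat.le_of_dvd (Set.ncard_pos (Set.toFinite _) |>.mpr (nonempty_orbit x)) hdvd

theorem MulAction.exists_orderOf_eq_prime_forall_smul_ne_of_card_eq_prime_pow [Finite G]
    [FaithfulSMul G X] [IsPretransitive G X] {p k : ℕ} [Fact p.Prime] (hX : Nat.card X = p ^ k)
    (hk : k ≠ 0) : ∃ g : G, orderOf g = p ∧ ∀ x : X, g • x ≠ x := by
  obtain ⟨P⟩ : Nonempty (Sylow p G) := inferInstance
  have hX0 : Nat.card X ≠ 0 := hX ▸ pow_ne_zero k (Fact.out : p.Prime).ne_zero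
  have : Nonempty X := (Nat.card_ne_zero.mp hX0).1
  have hpP : p ∣ Nat.card P := P.dvd_card_of_dvd_card <|
    (dvd_pow_self p hk).trans (hX ▸ card_dvd_card_of_isPretransitive)
  have : Nontrivial P := Finite.one_lt_card_iff_nontrivial.mp <|
    (Fact.out : p.Prime).one_lt.trans_le (Nat.le_of_dvd Nat.card_pos hpP)
  have := P.isPGroup'.center_nontrivial
  have hpZ : p ∣ Nat.card (Subgroup.center P) :=
    (P.isPGroup'.to_subgroup _).card_eq_or_dvd.resolve_left Finite.one_lt_card.ne'
  obtain ⟨z, hz⟩ := exists_prime_orderOf_dvd_card' p hpZ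
  refine ⟨(z : P), by rw [Subgroup.orderOf_coe, Subgroup.orderOf_coe, hz], fun x hx => ?_⟩
  have := P.isPretransitive_of_card_eq_prime_pow hX
  have hz1 : (z : P) = 1 :=
    (fixedBy_eq_univ_iff_eq_one (α := X)).mp (fixedBy_eq_univ_of_mem_center z.2 hx)
  rw [← Subgroup.orderOf_coe, hz1, orderOf_one] at hz
  exact (Fact.out : p.Prime).ne_one hz.symm

end

namespace Equiv.Perm

theorem card_modEq_fixedCount {g : Equiv.Perm Ω} (hg : (orderOf g).Prime) :
    Fintype.card Ω ≡ fixedCount g [MOD orderOf g] := by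
  classical
  have : Fact (orderOf g).Prime := ⟨hg⟩
  have hfix : fixedCount g = g.supportᶜ.card := by
    rw [fixedCount, Nat.card_eq_fintype_card, Fintype.card_subtype]
    congr 1
    ext x
    simp
  rw [hfix]
  exact (card_compl_support_modEq (n := 1) (by rw [pow_one, pow_orderOf_eq_one])).symm

end Equiv.Perm

theorem IsTransitive.isPretransitive_s7 {α : Type*} {G : Subgroup (Equiv.Perm α)}
    (hG : IsTransitive G) : IsPretransitive G α where
  exists_smul_eq x y := by
    obtain ⟨g, hg, hgxy⟩ := hG x y
    exact ⟨⟨g, hg⟩, hgxy⟩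

theorem HasFixity.one_lt_card {G : Subgroup (Equiv.Perm Ω)} {f : ℕ} (hf : HasFixity G f) :
    1 < Fintype.card Ω := by
  obtain ⟨-, g, -, hg1, -⟩ := hf
  obtain ⟨x, hx⟩ : ∃ x, g x ≠ x := not_forall.mp fun h => hg1 (Equiv.ext h)
  exact Fintype.one_lt_card_iff_nontrivial.mpr (nontrivial_of_ne _ _ hx)

namespace IsElusive

variable {G : Subgroup (Equiv.Perm Ω)}

theorem orderOf_le_fixedCount (hG : IsElusive G) {g : Equiv.Perm Ω} (hgG : g ∈ G)
    (hg : (orderOf g).Prime) (hgΩ : orderOf g ∣ Fintype.card Ω) :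
    orderOf g ≤ fixedCount g := by
  obtain ⟨x, hx⟩ : ∃ x, g x = x := by
    by_contra! h
    exact hG.2 ⟨g, hgG, hg, h⟩
  have hpos : 0 < fixedCount g := Nat.card_pos_iff.mpr ⟨⟨⟨x, hx⟩⟩, inferInstance⟩
  have hdvd : orderOf g ∣ fixedCount g := Nat.modEq_zero_iff_dvd.mp
    ((Equiv.Perm.card_modEq_fixedCount hg).symm.trans (Nat.modEq_zero_iff_dvd.mpr hgΩ))
  exact Nat.le_of_dvd hpos hdvd

theorem prime_le_of_hasFixity (hG : IsElusive G) {f p : ℕ} (hf : HasFixity G f) (hp : p.Prime)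
    (hpΩ : p ∣ Fintype.card Ω) : p ≤ f := by
  have : Fact p.Prime := ⟨hp⟩
  have := hG.1.isPretransitive_s7
  have : Nonempty Ω := Fintype.card_pos_iff.mp (zero_lt_one.trans hf.one_lt_card)
  obtain ⟨g, hg⟩ := exists_prime_orderOf_dvd_card' (G := G) p
    (hpΩ.trans (Nat.card_eq_fintype_card (α := Ω) ▸ card_dvd_card_of_isPretransitive))
  have hgp : orderOf (g : Equiv.Perm Ω) = p := (Subgroup.orderOf_coe g).trans hg
  have hg1 : (g : Equiv.Perm Ω) ≠ 1 := by
    rintro h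
    rw [h, orderOf_one] at hgp
    exact hp.ne_one hgp.symm
  calc p = orderOf (g : Equiv.Perm Ω) := hgp.symm
    _ ≤ fixedCount (g : Equiv.Perm Ω) := hG.orderOf_le_fixedCount g.2 (hgp ▸ hp) (hgp ▸ hpΩ)
    _ ≤ f := hf.1 g g.2 hg1

theorem card_ne_prime_pow (hG : IsElusive G) {p k : ℕ} (hp : p.Prime) (hk : k ≠ 0) :
    Fintype.card Ω ≠ p ^ k := by
  intro hΩ
  have : Fact p.Prime := ⟨hp⟩
  have := hG.1.isPretransitive_s7
  obtain ⟨g, hg, hfree⟩ := exists_orderOf_eq_prime_forall_smul_ne_of_card_eq_prime_pow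
    (G := G) (X := Ω) (Nat.card_eq_fintype_card.trans hΩ) hk
  exact hG.2 ⟨g, g.2, by rwa [Subgroup.orderOf_coe, hg], hfree⟩

end IsElusive

/-- an elusive group of fixity `f` on a set of odd cardinality
satisfies `f ≥ 5`. -/
theorem stmt_7 (G : Subgroup (Equiv.Perm Ω)) (f : ℕ) (hodd : Odd (Fintype.card Ω))
    (hel : IsElusive G) (hfix : HasFixity G f) :
    5 ≤ f := by
  have hcard := hfix.one_lt_card
  by_contra! hf5
  have hthree : ∀ {q : ℕ}, q.Prime → q ∣ Fintype.card Ω → q = 3 := by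
    intro q hq hqΩ
    have hq2 : q ≠ 2 := by
      rintro rfl
      exact Nat.not_even_iff_odd.mpr hodd (even_iff_two_dvd.mpr hqΩ)
    have hq5 : q < 5 := (hel.prime_le_of_hasFixity hfix hq hqΩ).trans_lt hf5
    have hq4 : q ≠ 4 := by
      rintro rfl
      norm_num at hq
    have := hq.two_le
    omega
  have hΩ := Nat.eq_prime_pow_of_unique_prime_dvd (by omega) hthree
  refine hel.card_ne_prime_pow Nat.prime_three (fun hk => ?_) hΩ
  rw [hk, pow_zero] at hΩ
  omega
end

section
/- Let Ω be a finite set, let G ≤ Sym(Ω) be an elusive permutation group of fixity f, and let H be a non-trivial normal subgroup of G with smallest prime divisor p_H of |H|. Then |Ω| · (p_H − 1) ≤ f · (|H| − 1). -/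
variable {Ω : Type*} [Fintype Ω]

/-!
Every point stabiliser `H_α` is non-trivial: otherwise, `H` being normal and `G` transitive, all
point stabilisers in `H` are conjugate to `H_α`, hence trivial, and an element of order `p_H`
(Cauchy) would be fixed-point free of prime order. So `|H_α| ≥ p_H`, and counting the pairs
`(h, α)` with `h α = α` gives `|Ω| p_H ≤ ∑_α |H_α| = ∑_h |fix h| ≤ |Ω| + (|H| - 1) f`.
-/

open MulAction

theorem Subgroup.minFac_card_le_card {G : Type*} [Group G] [Finite G] {K : Subgroup G}
    (hK : K ≠ ⊥) : (Nat.card G).minFac ≤ Nat.card K := by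
  have hK1 : Nat.card K ≠ 1 := by rwa [Ne, Subgroup.card_eq_one]
  calc (Nat.card G).minFac ≤ (Nat.card K).minFac :=
        Nat.minFac_le_of_dvd (Nat.minFac_prime hK1).two_le
          ((Nat.minFac_dvd _).trans K.card_subgroup_dvd_card)
    _ ≤ Nat.card K := Nat.minFac_le Nat.card_pos

namespace MulAction

variable {G X : Type*} [Group G] [MulAction G X]

theorem fixedBy_eq_empty_of_stabilizer_eq_bot [IsPretransitive G X] {N : Subgroup G} [N.Normal]
    {x : X} (hx : stabilizer N x = ⊥) {n : N} (hn : n ≠ 1) : fixedBy X n = ∅ := by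
  refine Set.eq_empty_of_forall_notMem fun y hy => hn ?_
  obtain ⟨g, rfl⟩ := exists_smul_eq G x y
  have hconj : g⁻¹ * n * g ∈ N := by simpa using ‹N.Normal›.conj_mem n n.2 g⁻¹
  have hfix : (⟨g⁻¹ * n * g, hconj⟩ : N) ∈ stabilizer N x := by
    change (g⁻¹ * n * g) • x = x
    rw [mul_smul, mul_smul, show (n : G) • g • x = g • x from hy, inv_smul_smul]
  rw [hx, Subgroup.mem_bot, Subtype.ext_iff] at hfix
  simpa [mul_assoc, inv_mul_eq_one, mul_eq_one_iff_eq_inv] using hfix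

variable [Fintype G]

theorem sum_card_fixedBy_le {f : ℕ} (hfix : ∀ g : G, g ≠ 1 → Nat.card (fixedBy X g) ≤ f) :
    ∑ g : G, Nat.card (fixedBy X g) ≤ Nat.card X + (Nat.card G - 1) * f := by
  classical
  rw [← Finset.add_sum_erase _ _ (Finset.mem_univ 1), fixedBy_one_eq_univ,
    Nat.card_univ]
  gcongr
  have hcard : (Finset.univ.erase (1 : G)).card = Nat.card G - 1 := by
    rw [Finset.card_erase_of_mem (Finset.mem_univ _), Finset.card_univ, Nat.card_eq_fintype_card]
  simpa only [hcard, smul_eq_mul] using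
    Finset.sum_le_card_nsmul (Finset.univ.erase 1) (fun g => Nat.card (fixedBy X g)) f
      fun g hg => hfix g (Finset.ne_of_mem_erase hg)

variable [Fintype X]

theorem sum_card_stabilizer_eq_sum_card_fixedBy :
    ∑ x : X, Nat.card (stabilizer G x) = ∑ g : G, Nat.card (fixedBy X g) := by
  rw [← Nat.card_sigma, ← Nat.card_sigma]
  exact Nat.card_congr <|
    (Equiv.subtypeProdEquivSigmaSubtype fun (x : X) (g : G) => g ∈ stabilizer G x).symm.trans <|
      ((Equiv.prodComm X G).subtypeEquiv fun _ => Iff.rfl).trans <|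
        Equiv.subtypeProdEquivSigmaSubtype fun (g : G) (x : X) => x ∈ fixedBy X g

theorem card_mul_minFac_le_sum_card_stabilizer (hstab : ∀ x : X, stabilizer G x ≠ ⊥) :
    Nat.card X * (Nat.card G).minFac ≤ ∑ x : X, Nat.card (stabilizer G x) := by
  simpa [Nat.card_eq_fintype_card, mul_comm] using
    Finset.card_nsmul_le_sum Finset.univ (fun x => Nat.card (stabilizer G x)) _
      fun x _ => Subgroup.minFac_card_le_card (hstab x)

theorem card_mul_minFac_sub_one_le {f : ℕ} (hstab : ∀ x : X, stabilizer G x ≠ ⊥)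
    (hfix : ∀ g : G, g ≠ 1 → Nat.card (fixedBy X g) ≤ f) :
    Nat.card X * ((Nat.card G).minFac - 1) ≤ f * (Nat.card G - 1) := by
  have key := (card_mul_minFac_le_sum_card_stabilizer hstab).trans <|
    (sum_card_stabilizer_eq_sum_card_fixedBy (G := G) (X := X)).trans_le (sum_card_fixedBy_le hfix)
  have hp : (Nat.card G).minFac - 1 + 1 = (Nat.card G).minFac :=
    Nat.sub_add_cancel (Nat.card G).minFac_pos
  nlinarith

end MulAction

theorem IsElusive.stabilizer_ne_bot {G : Subgroup (Equiv.Perm Ω)}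
    (hel : IsElusive G) {H : Subgroup G} [H.Normal] (hH : H ≠ ⊥) (α : Ω) :
    stabilizer H α ≠ ⊥ := by
  intro hα
  have : IsPretransitive G Ω :=
    ⟨fun α β => let ⟨g, hg, hgα⟩ := hel.1 α β; ⟨⟨g, hg⟩, hgα⟩⟩
  have hp : (Nat.card H).minFac.Prime :=
    Nat.minFac_prime (by rwa [Ne, Subgroup.card_eq_one])
  have := Fact.mk hp
  obtain ⟨x, hx⟩ := exists_prime_orderOf_dvd_card' (Nat.card H).minFac (Nat.minFac_dvd _)
  have hx1 : x ≠ 1 := by rintro rfl; simp [hp.ne_one.symm] at hx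
  refine hel.2 ⟨x, (x : G).2, ?_, fun β => ?_⟩
  · rwa [Subgroup.orderOf_coe, Subgroup.orderOf_coe, hx]
  · exact Set.eq_empty_iff_forall_notMem.mp (fixedBy_eq_empty_of_stabilizer_eq_bot hα hx1) β

/-- for an elusive group `G` of fixity `f` and a non-trivial normal
subgroup `H` of `G` with smallest prime divisor `p_H` of `|H|`, one has
`|Ω| * (p_H - 1) ≤ f * (|H| - 1)`. -/
theorem stmt_9 (G : Subgroup (Equiv.Perm Ω)) (f : ℕ) (hel : IsElusive G)
    (hfix : HasFixity G f) (H : Subgroup ↥G) (hHnormal : H.Normal) (hHbot : H ≠ ⊥) :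
    Fintype.card Ω * ((Nat.card ↥H).minFac - 1) ≤ f * (Nat.card ↥H - 1) := by
  classical
  rw [← Nat.card_eq_fintype_card]
  refine card_mul_minFac_sub_one_le (hel.stabilizer_ne_bot hHbot) fun h hh => ?_
  exact hfix.1 _ (h : G).2 (by simpa using hh)
end

section
/- Let Ω be a finite set and let G ≤ Sym(Ω) be a transitive 2-closed permutation group of fixity 4 that contains a non-trivial normal p-subgroup for some prime p. Then G contains a fixed-point-free element. -/
variable {Ω : Type*} [Fintype Ω]

/-- `G` is 2-closed: any permutation `σ` of `Ω` such that `(σ α, σ β)` lies in the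
`G`-orbit of `(α, β)` for all `α, β` belongs to `G`. -/
def IsTwoClosed (G : Subgroup (Equiv.Perm Ω)) : Prop :=
  ∀ σ : Equiv.Perm Ω, (∀ α β : Ω, ∃ g ∈ G, g α = σ α ∧ g β = σ β) → σ ∈ G

/-!
Suppose no element of `G` is fixed-point-free. The centre `K` of the normal `p`-subgroup is a
non-trivial abelian subgroup of `G` normalised by `G`. As `K` is abelian, a stabilizer `K_α` fixes
the `K`-orbit of `α` pointwise, and as `G` permutes the `K`-orbits transitively, all `K`-orbits have
the same size `s` and all `K_α` the same order `h`; fixity `4` forces `s ≤ 4`.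

If any two distinct `K_α` generate `K`, pick `x_α ∈ K \ K_α` depending only on `K_α`: the
permutation `α ↦ x_α α` agrees with an element of `K` on every pair of points, so it lies in the
2-closed group `G`, and it fixes no point. This happens when `s` is prime, and when `s = h = 4`
since distinct stabilizers then meet trivially. Otherwise `s = 4`, so `|K| = 4h ≤ s² = 16`, and
as every element of `K` fixes a point its order divides `h`, which leaves `h = 2`. Then `G` permutes
the seven involutions of `K` transitively by conjugation, so it has an element `g` of order `7`.
As `g` fixes a point, it centralises one involution, hence permuting the other six it centralises
all of them, so it fixes the at most four fixed points of each: `g = 1`.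
-/

open MulAction Equiv
open scoped IsMulCommutative

theorem MulAction.smul_eq_self_of_pow_eq_one_of_ncard_lt {M X : Type*} [Monoid M]
    [MulAction M X] [Finite X] {g : M} {p : ℕ} (hp : p.Prime) (hg : g ^ p = 1) {S : Set X}
    (hS : Set.MapsTo (g • ·) S S) (hcard : S.ncard < p) {x : X} (hx : x ∈ S) : g • x = x := by
  have hper : Function.IsPeriodicPt (g • ·) p x := by
    simp [Function.IsPeriodicPt, Function.IsFixedPt, smul_iterate, hg]
  rcases hp.eq_one_or_self_of_dvd _ hper.minimalPeriod_dvd with h1 | hpx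
  · exact Function.minimalPeriod_eq_one_iff_isFixedPt.mp h1
  · have hinj : (Set.Iio p).InjOn ((g • ·)^[·] x) :=
      hpx ▸ Function.iterate_injOn_Iio_minimalPeriod
    have hsub : ((g • ·)^[·] x) '' Set.Iio p ⊆ S := by
      rintro _ ⟨n, -, rfl⟩
      exact (hS.iterate n) hx
    have := Set.ncard_le_ncard hsub
    rw [hinj.ncard_image, Set.ncard_Iio_nat] at this
    omega

theorem Subgroup.ncard_conj_dvd_card {M : Type*} [Group M] (G : Subgroup M) [Finite G] (x : M) :
    {y | ∃ g ∈ G, g * x * g⁻¹ = y}.ncard ∣ Nat.card G := by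
  let C : Subgroup (ConjAct M) := G.map ConjAct.toConjAct.toMonoidHom
  have horbit : orbit C x = {y | ∃ g ∈ G, g * x * g⁻¹ = y} := by
    ext y
    simp only [mem_orbit_iff, Subtype.exists, Subgroup.mk_smul, C, Subgroup.mem_map]
    simp [ConjAct.toConjAct_smul]
  have hcard : Nat.card C = Nat.card G :=
    Subgroup.card_map_of_injective ConjAct.toConjAct.injective
  rw [← horbit, ← index_stabilizer, ← hcard]
  exact (stabilizer C x).index_dvd_card

theorem Subgroup.sup_eq_top_of_index_prime {A : Type*} [Group A] [Finite A] {H L : Subgroup A}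
    (hp : H.index.Prime) (hcard : Nat.card L = Nat.card H) (hne : H ≠ L) : H ⊔ L = ⊤ := by
  have h := relIndex_mul_index (le_sup_left : H ≤ H ⊔ L)
  rcases Nat.prime_mul_iff.mp (h ▸ hp) with ⟨-, h1⟩ | ⟨-, h1⟩
  · exact index_eq_one.mp h1
  · have hLH : L ≤ H := le_sup_right.trans (relIndex_eq_one.mp h1)
    exact absurd (eq_of_le_of_card_ge hLH hcard.ge).symm hne

theorem Subgroup.card_sup_of_inf_eq_bot {A : Type*} [CommGroup A] {H L : Subgroup A}
    (h : H ⊓ L = ⊥) : Nat.card (H ⊔ L : Subgroup A) = Nat.card H * Nat.card L := by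
  have hrel : L.relIndex (H ⊔ L) = Nat.card H := by
    rw [relIndex_sup_right, ← inf_relIndex_left, h, relIndex_bot_left]
  rw [← card_mul_index (L.subgroupOf (H ⊔ L)), ← relIndex, hrel,
    Nat.card_congr (subgroupOfEquivOfLe le_sup_right).toEquiv, mul_comm]

section CommGroup
variable {A X : Type*} [CommGroup A] [MulAction A X]

theorem MulAction.stabilizer_eq_of_mem_orbit {a b : X} (h : b ∈ orbit A a) :
    stabilizer A b = stabilizer A a := by
  obtain ⟨k, rfl⟩ := h
  exact stabilizer_smul_eq_right k a

theorem MulAction.smul_eq_self_of_mem_orbit {u : A} {a b : X} (hu : u ∈ stabilizer A a)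
    (hb : b ∈ orbit A a) : u • b = b := by
  rwa [← stabilizer_eq_of_mem_orbit hb] at hu

theorem MulAction.exists_smul_eq_of_sup_stabilizer_eq_top {a b : X}
    (h : stabilizer A a ⊔ stabilizer A b = ⊤) (y z : A) :
    ∃ k : A, k • a = y • a ∧ k • b = z • b := by
  obtain ⟨u, hu, w, hw, huw⟩ := Subgroup.mem_sup.mp (h ▸ Subgroup.mem_top (y⁻¹ * z))
  refine ⟨y * u, by rw [mul_smul, hu], ?_⟩
  have : y * u = z * w⁻¹ := by rw [eq_mul_inv_iff_mul_eq, mul_assoc, huw, mul_inv_cancel_left]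
  rw [this, mul_smul, inv_smul_eq_iff.mpr hw.symm]

end CommGroup

section Perm
variable {X : Type*}

theorem ncard_le_fixedCount [Finite X] {g : Perm X} {S : Set X} (hS : ∀ x ∈ S, g x = x) :
    S.ncard ≤ fixedCount g :=
  (Set.ncard_le_ncard hS).trans_eq (Nat.card_coe_set_eq _).symm

theorem orbit_apply_eq_image {K : Subgroup (Perm X)} {g : Perm X}
    (hg : g ∈ Subgroup.normalizer K) (x : X) : orbit K (g x) = g '' orbit K x := by
  ext y
  simp only [mem_orbit_iff, Set.mem_image, Subtype.exists, Subgroup.mk_smul, Perm.smul_def]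
  constructor
  · rintro ⟨k, hk, rfl⟩
    exact ⟨_, ⟨g⁻¹ * k * g, (Subgroup.mem_normalizer_iff''.mp hg k).mp hk, rfl⟩, by simp⟩
  · rintro ⟨_, ⟨k, hk, rfl⟩, rfl⟩
    exact ⟨g * k * g⁻¹, (Subgroup.mem_normalizer_iff.mp hg k).mp hk, by simp⟩

theorem index_stabilizer_apply {K : Subgroup (Perm X)} {g : Perm X}
    (hg : g ∈ Subgroup.normalizer K) (x : X) :
    (stabilizer K (g x)).index = (stabilizer K x).index := by
  rw [index_stabilizer, index_stabilizer, orbit_apply_eq_image hg,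
    Set.ncard_image_of_injective _ g.injective]

theorem existsUnique_of_card_stabilizer_eq_two {K : Subgroup (Perm X)} {x : X}
    (h : Nat.card (stabilizer K x) = 2) : ∃! v : Perm X, v ∈ K ∧ v ≠ 1 ∧ v x = x := by
  obtain ⟨⟨⟨v, hvK⟩, hvx⟩, hv1, hv⟩ := (Nat.card_eq_two_iff' 1).mp h
  refine ⟨v, ⟨hvK, fun h1 => hv1 (by ext; simp [h1]), hvx⟩, fun w ⟨hwK, hw1, hwx⟩ => ?_⟩
  simpa [Subtype.ext_iff] using hv ⟨⟨w, hwK⟩, hwx⟩ (by simpa [Subtype.ext_iff] using hw1)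

theorem exists_fixedPointFree_of_sup_stabilizer_eq_top [Finite X] {G K : Subgroup (Perm X)}
    [IsMulCommutative K] (hKG : K ≤ G) (h2c : IsTwoClosed G)
    (hne : ∀ x : X, stabilizer K x ≠ ⊤)
    (hsup : ∀ x y : X, stabilizer K x ≠ stabilizer K y →
      stabilizer K x ⊔ stabilizer K y = ⊤) :
    ∃ σ ∈ G, ∀ x, σ x ≠ x := by
  choose! u hu using fun H : Subgroup K => SetLike.exists_not_mem_of_ne_top H
  let f (x : X) : X := u (stabilizer K x) • x
  have hf : Function.Injective f := by
    intro a b hab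
    have hb : b ∈ orbit K a := ⟨(u (stabilizer K b))⁻¹ * u (stabilizer K a), by
      simp only [f] at hab; simp only [mul_smul, hab, inv_smul_smul]⟩
    simpa [f, stabilizer_eq_of_mem_orbit hb] using hab
  let σ := Equiv.ofBijective f (Finite.injective_iff_bijective.mp hf)
  refine ⟨σ, h2c σ fun a b => ?_, fun x hx => hu _ (hne x) hx⟩
  obtain ⟨k, hka, hkb⟩ : ∃ k : K, k • a = σ a ∧ k • b = σ b := by
    by_cases hab : stabilizer K a = stabilizer K b
    · exact ⟨u (stabilizer K a), rfl, by simp [σ, f, hab]⟩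
    · exact exists_smul_eq_of_sup_stabilizer_eq_top (hsup a b hab) _ _
  exact ⟨k, hKG k.2, hka, hkb⟩

end Perm

structure Counterexample {X : Type*} (G K : Subgroup (Perm X)) : Prop where
  isTransitive : IsTransitive G
  isTwoClosed : IsTwoClosed G
  fixedCount_le : ∀ g ∈ G, g ≠ 1 → fixedCount g ≤ 4
  exists_apply_eq : ∀ g ∈ G, ∃ x, g x = x
  le : K ≤ G
  le_normalizer : G ≤ Subgroup.normalizer K

namespace Counterexample

variable {X : Type*} {G K : Subgroup (Perm X)}

theorem conj_mem (hC : Counterexample G K) {g v : Perm X} (hg : g ∈ G) (hv : v ∈ K) :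
    g * v * g⁻¹ ∈ K :=
  (Subgroup.mem_normalizer_iff.mp (hC.le_normalizer hg) v).mp hv

theorem exists_mem_stabilizer (hC : Counterexample G K) (k : K) :
    ∃ x : X, k ∈ stabilizer K x :=
  hC.exists_apply_eq k (hC.le k.2)

theorem index_stabilizer_eq (hC : Counterexample G K) (x y : X) :
    (stabilizer K x).index = (stabilizer K y).index := by
  obtain ⟨g, hg, rfl⟩ := hC.isTransitive y x
  exact index_stabilizer_apply (hC.le_normalizer hg) y

theorem card_stabilizer_eq [Finite X] (hC : Counterexample G K) (x y : X) :
    Nat.card (stabilizer K x) = Nat.card (stabilizer K y) := by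
  have h := (stabilizer K x).card_mul_index
  rw [hC.index_stabilizer_eq x y, ← (stabilizer K y).card_mul_index] at h
  exact Nat.eq_of_mul_eq_mul_right (Nat.pos_of_ne_zero Subgroup.index_ne_zero_of_finite) h

theorem eq_bot_of_stabilizer_eq (hC : Counterexample G K) (x : X)
    (h : ∀ y : X, stabilizer K y = stabilizer K x) : K = ⊥ := by
  refine (Subgroup.eq_bot_iff_forall K).mpr fun k hk => Perm.ext fun y => ?_
  obtain ⟨z, hz⟩ := hC.exists_mem_stabilizer ⟨k, hk⟩
  have hzy : (⟨k, hk⟩ : K) ∈ stabilizer K y := by rwa [h y, ← h z]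
  exact hzy

theorem stabilizer_ne_top (hC : Counterexample G K) (hK : K ≠ ⊥) (x : X) :
    stabilizer K x ≠ ⊤ := by
  intro htop
  have h (y : X) : stabilizer K y = ⊤ :=
    Subgroup.index_eq_one.mp ((hC.index_stabilizer_eq y x).trans (Subgroup.index_eq_one.mpr htop))
  exact hK (hC.eq_bot_of_stabilizer_eq x fun y => (h y).trans htop.symm)

theorem ncard_le_four [Finite X] (hC : Counterexample G K) {g : Perm X} (hg : g ∈ G)
    (hg1 : g ≠ 1) {S : Set X} (hS : ∀ x ∈ S, g x = x) : S.ncard ≤ 4 :=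
  (ncard_le_fixedCount hS).trans (hC.fixedCount_le g hg hg1)

theorem ncard_orbit_le_four [Finite X] [IsMulCommutative K] (hC : Counterexample G K) {k : K}
    (hk : k ≠ 1) {x : X} (hkx : k ∈ stabilizer K x) : (orbit K x).ncard ≤ 4 :=
  hC.ncard_le_four (hC.le k.2) (by simpa using hk) fun _ hy => smul_eq_self_of_mem_orbit hkx hy

theorem index_stabilizer_le_four [Finite X] [IsMulCommutative K] (hC : Counterexample G K)
    (hK : K ≠ ⊥) (x : X) : (stabilizer K x).index ≤ 4 := by
  obtain ⟨k, hk⟩ := Subgroup.ne_bot_iff_exists_ne_one.mp hK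
  obtain ⟨z, hz⟩ := hC.exists_mem_stabilizer k
  rw [hC.index_stabilizer_eq x z, index_stabilizer]
  exact hC.ncard_orbit_le_four hk hz

theorem stabilizer_inf_eq_bot [Finite X] [IsMulCommutative K] (hC : Counterexample G K)
    {x y : X} (hx : 2 < (stabilizer K x).index) (hne : stabilizer K x ≠ stabilizer K y) :
    stabilizer K x ⊓ stabilizer K y = ⊥ := by
  by_contra h
  obtain ⟨⟨k, hkx, hky⟩, hk⟩ := Subgroup.ne_bot_iff_exists_ne_one.mp h
  have hdisj : Disjoint (orbit K x) (orbit K y) := Set.disjoint_left.mpr fun z hzx hzy =>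
    hne ((stabilizer_eq_of_mem_orbit hzx).symm.trans (stabilizer_eq_of_mem_orbit hzy))
  have hk1 : (k : Perm X) ≠ 1 := fun h1 => hk (Subtype.ext (Subtype.ext h1))
  have := hC.ncard_le_four (hC.le k.2) hk1 (S := orbit K x ∪ orbit K y) fun z hz =>
    hz.elim (smul_eq_self_of_mem_orbit hkx) (smul_eq_self_of_mem_orbit hky)
  rw [Set.ncard_union_eq hdisj, ← index_stabilizer, ← index_stabilizer,
    ← hC.index_stabilizer_eq x y] at this
  omega

theorem exists_sup_stabilizer_ne_top [Finite X] [IsMulCommutative K] (hC : Counterexample G K)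
    (hK : K ≠ ⊥) :
    ∃ y z : X, stabilizer K y ≠ stabilizer K z ∧ stabilizer K y ⊔ stabilizer K z ≠ ⊤ := by
  by_contra! hsup
  obtain ⟨σ, hσG, hσ⟩ := exists_fixedPointFree_of_sup_stabilizer_eq_top hC.le hC.isTwoClosed
    (hC.stabilizer_ne_top hK) hsup
  obtain ⟨y, hy⟩ := hC.exists_apply_eq σ hσG
  exact hσ y hy

theorem orderOf_dvd_card_stabilizer [Finite X] (hC : Counterexample G K) (k : K) (x : X) :
    orderOf k ∣ Nat.card (stabilizer K x) := by
  obtain ⟨z, hz⟩ := hC.exists_mem_stabilizer k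
  rw [hC.card_stabilizer_eq x z]
  exact Subgroup.orderOf_dvd_natCard _ hz

theorem sup_stabilizer_eq_top_of_prime [Finite X] (hC : Counterexample G K) {x : X}
    (hp : (stabilizer K x).index.Prime) (y z : X) (hne : stabilizer K y ≠ stabilizer K z) :
    stabilizer K y ⊔ stabilizer K z = ⊤ :=
  Subgroup.sup_eq_top_of_index_prime (hC.index_stabilizer_eq x y ▸ hp)
    (hC.card_stabilizer_eq z y) hne

theorem card_stabilizer_eq_two_or_four [Finite X] [IsMulCommutative K]
    (hC : Counterexample G K) (hK : K ≠ ⊥) {x : X} (hx : (stabilizer K x).index = 4) :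
    Nat.card (stabilizer K x) = 2 ∨ Nat.card (stabilizer K x) = 4 := by
  have hcard : Nat.card K = Nat.card (stabilizer K x) * 4 :=
    hx ▸ (Subgroup.card_mul_index _).symm
  obtain ⟨y, hy⟩ : ∃ y : X, stabilizer K y ≠ stabilizer K x := by
    by_contra! h
    exact hK (hC.eq_bot_of_stabilizer_eq x h)
  have hle : Nat.card K ≤ 16 := by
    have := Subgroup.index_inf_le (H := stabilizer K x) (K := stabilizer K y)
    rwa [hC.stabilizer_inf_eq_bot (by omega) hy.symm, Subgroup.index_bot, hx,
      ← hC.index_stabilizer_eq x y, hx] at this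
  have h2 : 2 ∣ Nat.card (stabilizer K x) := by
    have : Fact (Nat.Prime 2) := ⟨Nat.prime_two⟩
    obtain ⟨k, hk⟩ := exists_prime_orderOf_dvd_card' (G := K) 2 (by omega)
    exact hk ▸ hC.orderOf_dvd_card_stabilizer k x
  have hpos : 0 < Nat.card (stabilizer K x) := Nat.card_pos
  omega

theorem sup_stabilizer_eq_top_of_card_eq_four [Finite X] [IsMulCommutative K]
    (hC : Counterexample G K) {x : X} (hx : (stabilizer K x).index = 4)
    (hcard : Nat.card (stabilizer K x) = 4) (y z : X) (hne : stabilizer K y ≠ stabilizer K z) :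
    stabilizer K y ⊔ stabilizer K z = ⊤ := by
  have hy : 2 < (stabilizer K y).index := by rw [hC.index_stabilizer_eq y x]; omega
  apply Subgroup.eq_top_of_card_eq
  rw [Subgroup.card_sup_of_inf_eq_bot (hC.stabilizer_inf_eq_bot hy hne),
    hC.card_stabilizer_eq y x, hC.card_stabilizer_eq z x, ← (stabilizer K x).card_mul_index,
    hcard, hx]

theorem seven_dvd_card [Finite X] (hC : Counterexample G K) (hK : Nat.card K = 8)
    (h2 : ∀ x : X, Nat.card (stabilizer K x) = 2) (x : X) : 7 ∣ Nat.card G := by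
  obtain ⟨v, ⟨hvK, hv1, hvx⟩, -⟩ := existsUnique_of_card_stabilizer_eq_two (h2 x)
  have hconj : {w | ∃ g ∈ G, g * v * g⁻¹ = w} = (K : Set (Perm X)) \ {1} := by
    ext w
    constructor
    · rintro ⟨g, hg, rfl⟩
      exact ⟨hC.conj_mem hg hvK, by simpa using hv1⟩
    · rintro ⟨hwK, hw1⟩
      obtain ⟨y, hy⟩ := hC.exists_apply_eq w (hC.le hwK)
      obtain ⟨g, hg, rfl⟩ := hC.isTransitive x y
      refine ⟨g, hg, (existsUnique_of_card_stabilizer_eq_two (h2 (g x))).unique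
        ⟨hC.conj_mem hg hvK, by simpa using hv1, by simp [hvx]⟩ ⟨hwK, hw1, hy⟩⟩
  have h7 : ((K : Set (Perm X)) \ {1}).ncard = 7 := by
    rw [Set.ncard_sdiff_singleton_of_mem K.one_mem, ← Nat.card_coe_set_eq]
    simp [hK]
  simpa [hconj, h7] using G.ncard_conj_dvd_card v

theorem conj_eq_of_pow_seven_eq_one [Finite X] (hC : Counterexample G K) (hK : Nat.card K = 8)
    (h2 : ∀ x : X, Nat.card (stabilizer K x) = 2) {g : Perm X} (hg : g ∈ G) (hg7 : g ^ 7 = 1)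
    {w : Perm X} (hw : w ∈ K) : g * w * g⁻¹ = w := by
  obtain ⟨x, hx⟩ := hC.exists_apply_eq g hg
  obtain ⟨v, ⟨hvK, hv1, hvx⟩, hv⟩ := existsUnique_of_card_stabilizer_eq_two (h2 x)
  have hgv : g * v * g⁻¹ = v := hv _ ⟨hC.conj_mem hg hvK, by simpa using hv1, by
    rw [Perm.mul_apply, Perm.mul_apply, Perm.inv_eq_iff_eq.mpr hx.symm, hvx, hx]⟩
  by_cases hw1 : w = 1
  · simp [hw1]
  by_cases hwv : w = v
  · rw [hwv, hgv]
  have hmaps : Set.MapsTo (ConjAct.toConjAct g • ·) ((K : Set (Perm X)) \ {1, v})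
      ((K : Set (Perm X)) \ {1, v}) := by
    rintro u ⟨huK, hu⟩
    simp only [Set.mem_insert_iff, Set.mem_singleton_iff, not_or] at hu
    refine ⟨hC.conj_mem hg huK, ?_⟩
    simp only [ConjAct.toConjAct_smul, Set.mem_insert_iff, Set.mem_singleton_iff, conj_eq_one_iff,
      not_or]
    exact ⟨hu.1, fun h => hu.2 (by rw [← hgv] at h; simpa using h)⟩
  have hcard : ((K : Set (Perm X)) \ {1, v}).ncard < 7 := by
    rw [Set.ncard_sdiff (by simp [Set.insert_subset_iff, K.one_mem, hvK]),
      Set.ncard_pair hv1.symm, ← Nat.card_coe_set_eq]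
    simp [hK]
  simpa [ConjAct.toConjAct_smul] using smul_eq_self_of_pow_eq_one_of_ncard_lt (by norm_num)
    (by rw [← map_pow, hg7, map_one]) hmaps hcard (x := w) (by simp [hw, hw1, hwv])

theorem eq_one_of_pow_seven_eq_one [Finite X] (hC : Counterexample G K) (hK : Nat.card K = 8)
    (h2 : ∀ x : X, Nat.card (stabilizer K x) = 2) {g : Perm X} (hg : g ∈ G) (hg7 : g ^ 7 = 1) :
    g = 1 := by
  ext x
  obtain ⟨v, ⟨hvK, hv1, hvx⟩, -⟩ := existsUnique_of_card_stabilizer_eq_two (h2 x)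
  have hgv : g * v = v * g := by
    rw [← mul_inv_eq_iff_eq_mul.mp (hC.conj_eq_of_pow_seven_eq_one hK h2 hg hg7 hvK)]
  have hmaps : Set.MapsTo (g • ·) {y | v y = y} {y | v y = y} := fun y (hy : v y = y) => by
    simp only [Set.mem_ofPred_eq, Perm.smul_def]
    rw [← Perm.mul_apply, ← hgv, Perm.mul_apply, hy]
  have hcard := hC.ncard_le_four (hC.le hvK) hv1 (S := {y | v y = y}) fun _ hy => hy
  exact smul_eq_self_of_pow_eq_one_of_ncard_lt (by norm_num) hg7 hmaps (by omega) hvx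

theorem false_of_card_stabilizer_eq_two [Finite X] (hC : Counterexample G K) {x : X}
    (hx : (stabilizer K x).index = 4) (hcard : Nat.card (stabilizer K x) = 2) : False := by
  have h2 (y : X) : Nat.card (stabilizer K y) = 2 := (hC.card_stabilizer_eq y x).trans hcard
  have hK : Nat.card K = 8 := by rw [← (stabilizer K x).card_mul_index, hcard, hx]
  have : Fact (Nat.Prime 7) := ⟨by norm_num⟩
  obtain ⟨g, hg⟩ := exists_prime_orderOf_dvd_card' 7 (hC.seven_dvd_card hK h2 x)
  rw [← Subgroup.orderOf_coe] at hg
  have hg1 := hC.eq_one_of_pow_seven_eq_one hK h2 g.2 (hg ▸ pow_orderOf_eq_one _)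
  rw [hg1, orderOf_one] at hg
  omega

theorem eq_bot [Finite X] [IsMulCommutative K] (hC : Counterexample G K) : K = ⊥ := by
  by_contra hK
  obtain ⟨k, hk⟩ := Subgroup.ne_bot_iff_exists_ne_one.mp hK
  obtain ⟨x, -⟩ := hC.exists_mem_stabilizer k
  have hs2 : 2 ≤ (stabilizer K x).index := by
    have hs1 : (stabilizer K x).index ≠ 1 := fun h =>
      hC.stabilizer_ne_top hK x (Subgroup.index_eq_one.mp h)
    have hs0 : (stabilizer K x).index ≠ 0 := Subgroup.index_ne_zero_of_finite
    omega
  have hs4 := hC.index_stabilizer_le_four hK x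
  obtain ⟨y, z, hne, hsup⟩ := hC.exists_sup_stabilizer_ne_top hK
  interval_cases hs : (stabilizer K x).index
  · exact hsup (hC.sup_stabilizer_eq_top_of_prime (hs ▸ Nat.prime_two) y z hne)
  · exact hsup (hC.sup_stabilizer_eq_top_of_prime (hs ▸ Nat.prime_three) y z hne)
  · rcases hC.card_stabilizer_eq_two_or_four hK hs with h | h
    · exact hC.false_of_card_stabilizer_eq_two hs h
    · exact hsup (hC.sup_stabilizer_eq_top_of_card_eq_four hs h y z hne)

end Counterexample

/-- a transitive 2-closed group of fixity `4` with a non-trivial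
normal `p`-subgroup contains a fixed-point-free element. -/
theorem stmt_18 (G : Subgroup (Equiv.Perm Ω)) (htr : IsTransitive G)
    (h2c : IsTwoClosed G) (hfix : HasFixity G 4) (p : ℕ) (hp : p.Prime)
    (N : Subgroup ↥G) (hNnormal : N.Normal) (hNbot : N ≠ ⊥) (hNp : IsPGroup p ↥N) :
    ∃ g ∈ G, ∀ x : Ω, g x ≠ x := by
  let K := ((Subgroup.center N).map N.subtype).map G.subtype
  have hK : K ≠ ⊥ := by
    have : Fact p.Prime := ⟨hp⟩
    have : Nontrivial N := N.nontrivial_iff_ne_bot.mpr hNbot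
    rw [Ne, Subgroup.map_eq_bot_iff_of_injective _ G.subtype_injective,
      Subgroup.map_eq_bot_iff_of_injective _ N.subtype_injective]
    exact (Subgroup.nontrivial_iff_ne_bot _).mp hNp.center_nontrivial
  have hGK : G ≤ Subgroup.normalizer K := by
    have hZ := Subgroup.le_normalizer_map (H := (Subgroup.center N).map N.subtype) G.subtype
    rwa [Subgroup.normalizer_eq_top, ← MonoidHom.range_eq_map, Subgroup.range_subtype] at hZ
  by_contra! hno
  exact hK (Counterexample.eq_bot ⟨htr, h2c, hfix.1, hno, Subgroup.map_subtype_le _, hGK⟩)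
end
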